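/- There exist δ > 0 and a constant C < ∞ such that |r'(τ)|/σ(τ) ≤ C for all τ ∈ (0, δ], where σ(τ) = (−r''(0) − r'(τ)²/(1 − r²(τ)))^{1/2}. -/

import Mathlib

open MeasureTheory ProbabilityTheory Set Filter Topology Real
open scoped ENNReal NNReal

/-- The correlation function `r(τ) = ∫ cos(λτ) dμ(λ)` associated with a spectral measure `μ`. -/
noncomputable def specCorr (μ : MeasureTheory.Measure ℝ) (τ : ℝ) : ℝ :=
  ∫ l : ℝ, Real.cos (l * τ) ∂μ

/-- The Geman function `L(τ) = (r''(τ) − r''(0))/τ`. -/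
noncomputable def gemanL (μ : MeasureTheory.Measure ℝ) (τ : ℝ) : ℝ :=
  (deriv (deriv (specCorr μ)) τ - deriv (deriv (specCorr μ)) 0) / τ

/-- `σ²(τ) = −r''(0) − r'(τ)²/(1 − r²(τ))`, the conditional variance of `Ẋ₀` given
`X₀` and `X_τ`. -/
noncomputable def sigmaSq (μ : MeasureTheory.Measure ℝ) (τ : ℝ) : ℝ :=
  -(deriv (deriv (specCorr μ)) 0) - (deriv (specCorr μ) τ) ^ 2 / (1 - (specCorr μ τ) ^ 2)

/-- Condition (1) of Kratz–León: near `0`, `r(τ) = 1 + (r''(0)/2)τ² + θ(τ)` with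
`θ(τ) > 0`, `θ(τ)/τ² → 0`, `θ'(τ)/τ → 0` and `θ''(τ) → 0` as `τ → 0⁺`;
`r` is moreover twice differentiable. -/
def ConditionOne (r : ℝ → ℝ) : Prop :=
  (∀ τ : ℝ, DifferentiableAt ℝ r τ ∧ DifferentiableAt ℝ (deriv r) τ) ∧
  ∃ δ₀ > (0:ℝ), ∃ θ : ℝ → ℝ,
    (∀ τ ∈ Set.Ioc (0:ℝ) δ₀,
        r τ = 1 + (deriv (deriv r) 0 / 2) * τ ^ 2 + θ τ ∧ 0 < θ τ) ∧
    Filter.Tendsto (fun τ => θ τ / τ ^ 2) (nhdsWithin 0 (Set.Ioi 0)) (nhds 0) ∧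
    Filter.Tendsto (fun τ => deriv θ τ / τ) (nhdsWithin 0 (Set.Ioi 0)) (nhds 0) ∧
    Filter.Tendsto (fun τ => deriv (deriv θ) τ) (nhdsWithin 0 (Set.Ioi 0)) (nhds 0)

/-
Let `λ ∼ μ` and `λ₂ = E λ²`, so that `r(τ) = E cos(λτ)`, `r'(τ) = -E[λ sin(λτ)]` and
`r''(0) = -λ₂`. Then `|r'(τ)| ≤ λ₂ τ` and `1 - r(τ)² ≤ λ₂ τ²`. Cauchy–Schwarz gives
`r'(τ)² ≤ λ₂ E sin²(λτ)`, while `1 - r(τ)² = E sin²(λτ) + Var cos(λτ)`; together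
`σ²(τ) (1 - r(τ)²) ≥ λ₂ Var cos(λτ)`. Because `λ²` is not a.s. constant, there are two
separated ranges of `λ²` of positive mass, on which `cos(λτ)` differs by a multiple of `τ²`;
so `Var cos(λτ) ≥ K τ⁴`, hence `σ²(τ) ≥ K τ²` and `|r'(τ)|/σ(τ) ≤ λ₂/√K`.
-/

theorem sq_integral_mul_le_integral_sq_mul_integral_sq {α : Type*} [MeasurableSpace α]
    {μ : Measure α} {f g : α → ℝ}
    (hf : Integrable (fun x => f x ^ 2) μ) (hg : Integrable (fun x => g x ^ 2) μ)
    (hfg : Integrable (fun x => f x * g x) μ) :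
    (∫ x, f x * g x ∂μ) ^ 2 ≤ (∫ x, f x ^ 2 ∂μ) * ∫ x, g x ^ 2 ∂μ := by
  have hquad : ∀ t : ℝ,
      0 ≤ (∫ x, g x ^ 2 ∂μ) * (t * t) + (2 * ∫ x, f x * g x ∂μ) * t + ∫ x, f x ^ 2 ∂μ := by
    intro t
    have h0 : 0 ≤ ∫ x, (t * t) * g x ^ 2 + (2 * t) * (f x * g x) + f x ^ 2 ∂μ :=
      integral_nonneg fun x => by dsimp only [Pi.zero_apply]; nlinarith [sq_nonneg (t * g x + f x)]
    rw [integral_add ?_ hf, integral_add (hg.const_mul _) (hfg.const_mul _),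
      integral_const_mul, integral_const_mul] at h0
    · linarith
    · exact (hg.const_mul _).add (hfg.const_mul _)
  have hdisc := discrim_le_zero hquad
  rw [discrim] at hdisc
  nlinarith

theorem mul_min_measureReal_le_integral_sq_sub {Ω : Type*} [MeasurableSpace Ω] {μ : Measure Ω}
    [IsFiniteMeasure μ] {Y : Ω → ℝ} {S T : Set Ω} {u v : ℝ} (a : ℝ)
    (hY : Integrable (fun ω => (Y ω - a) ^ 2) μ) (hS : MeasurableSet S) (hT : MeasurableSet T)
    (hSY : ∀ ω ∈ S, u ≤ Y ω) (hTY : ∀ ω ∈ T, Y ω ≤ v) (hvu : v ≤ u) :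
    ((u - v) / 2) ^ 2 * min (μ.real S) (μ.real T) ≤ ∫ ω, (Y ω - a) ^ 2 ∂μ := by
  obtain ⟨W, hW, hWmin, hWY⟩ : ∃ W, MeasurableSet W ∧ min (μ.real S) (μ.real T) ≤ μ.real W ∧
      ∀ ω ∈ W, ((u - v) / 2) ^ 2 ≤ (Y ω - a) ^ 2 := by
    rcases le_or_gt a ((u + v) / 2) with ha | ha
    · refine ⟨S, hS, min_le_left _ _, fun ω hω => ?_⟩
      nlinarith [hSY ω hω]
    · refine ⟨T, hT, min_le_right _ _, fun ω hω => ?_⟩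
      nlinarith [hTY ω hω]
  calc ((u - v) / 2) ^ 2 * min (μ.real S) (μ.real T)
      ≤ ((u - v) / 2) ^ 2 * μ.real W := by gcongr
    _ ≤ ∫ ω in W, (Y ω - a) ^ 2 ∂μ :=
      setIntegral_ge_of_const_le_real hW (measure_ne_top μ W) hWY hY.integrableOn
    _ ≤ ∫ ω, (Y ω - a) ^ 2 ∂μ := setIntegral_le_integral hY (ae_of_all _ fun ω => sq_nonneg _)

theorem cos_le_one_sub_sq_div_two_add {x : ℝ} (hx : x ^ 2 ≤ 1) :
    cos x ≤ 1 - x ^ 2 / 2 + x ^ 4 * (5 / 96) := by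
  have hx' : |x| ≤ 1 := by rwa [← sq_le_one_iff_abs_le_one]
  have := (abs_le.1 (cos_bound hx')).2
  rwa [pow_abs, abs_of_nonneg (by positivity), sub_le_iff_le_add'] at this

section SpectralMeasure

variable {μ : Measure ℝ}

theorem integrable_cos_mul [IsFiniteMeasure μ] (τ : ℝ) : Integrable (fun l => cos (l * τ)) μ :=
  .of_bound (by fun_prop) 1 (ae_of_all _ fun l => by simpa using abs_cos_le_one (l * τ))

theorem integrable_sin_mul_sq [IsFiniteMeasure μ] (τ : ℝ) :
    Integrable (fun l => sin (l * τ) ^ 2) μ :=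
  .of_bound (by fun_prop) 1 (ae_of_all _ fun l => by simpa using sin_sq_le_one (l * τ))

theorem integrable_cos_mul_sub_sq [IsFiniteMeasure μ] (τ a : ℝ) :
    Integrable (fun l => (cos (l * τ) - a) ^ 2) μ := by
  refine .of_bound (by fun_prop) ((1 + |a|) ^ 2) (ae_of_all _ fun l => ?_)
  rw [norm_pow, Real.norm_eq_abs]
  gcongr
  exact (abs_sub _ _).trans (by gcongr; exact abs_cos_le_one _)

theorem integrable_id_of_integrable_sq [IsFiniteMeasure μ]
    (h2 : Integrable (fun l : ℝ => l ^ 2) μ) : Integrable (fun l : ℝ => l) μ :=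
  ((memLp_two_iff_integrable_sq aestronglyMeasurable_id).2 h2).integrable one_le_two

theorem integrable_mul_sin_mul [IsFiniteMeasure μ] (h2 : Integrable (fun l : ℝ => l ^ 2) μ)
    (τ : ℝ) : Integrable (fun l => l * sin (l * τ)) μ :=
  (integrable_id_of_integrable_sq h2).mul_bdd (by fun_prop)
    (ae_of_all _ fun l => by simpa using abs_sin_le_one (l * τ))

theorem hasDerivAt_specCorr [IsFiniteMeasure μ] (h2 : Integrable (fun l : ℝ => l ^ 2) μ)
    (x : ℝ) : HasDerivAt (specCorr μ) (-∫ l, l * sin (l * x) ∂μ) x := by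
  rw [← integral_neg]
  refine (hasDerivAt_integral_of_dominated_loc_of_deriv_le (F := fun y l => cos (l * y))
    (F' := fun y l => -(l * sin (l * y)))
    (bound := fun l => |l|) univ_mem (.of_forall fun y => by fun_prop) (integrable_cos_mul x)
    (by fun_prop) (ae_of_all _ fun l y _ => ?_) (integrable_id_of_integrable_sq h2).abs
    (ae_of_all _ fun l y _ => ?_)).2
  · simpa [abs_mul] using mul_le_of_le_one_right (abs_nonneg l) (abs_sin_le_one (l * y))
  · exact (((hasDerivAt_id' y).const_mul l).cos).congr_deriv (by ring)

theorem hasDerivAt_deriv_specCorr [IsFiniteMeasure μ] (h2 : Integrable (fun l : ℝ => l ^ 2) μ)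
    (x : ℝ) : HasDerivAt (deriv (specCorr μ)) (-∫ l, l ^ 2 * cos (l * x) ∂μ) x := by
  rw [funext fun y => (hasDerivAt_specCorr h2 y).deriv]
  refine (hasDerivAt_integral_of_dominated_loc_of_deriv_le (F := fun y l => l * sin (l * y))
    (F' := fun y l => l ^ 2 * cos (l * y)) (bound := fun l => l ^ 2) univ_mem
    (.of_forall fun y => by fun_prop) (integrable_mul_sin_mul h2 x) (by fun_prop)
    (ae_of_all _ fun l y _ => ?_) h2 (ae_of_all _ fun l y _ => ?_)).2.neg
  · simpa [abs_mul] using mul_le_of_le_one_right (sq_nonneg l) (abs_cos_le_one (l * y))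
  · exact ((((hasDerivAt_id' y).const_mul l).sin).const_mul l).congr_deriv (by ring)

theorem deriv_deriv_specCorr_zero [IsFiniteMeasure μ] (h2 : Integrable (fun l : ℝ => l ^ 2) μ) :
    deriv (deriv (specCorr μ)) 0 = -∫ l, l ^ 2 ∂μ := by
  simp [(hasDerivAt_deriv_specCorr h2 0).deriv]

theorem abs_deriv_specCorr_le [IsFiniteMeasure μ] (h2 : Integrable (fun l : ℝ => l ^ 2) μ)
    (τ : ℝ) : |deriv (specCorr μ) τ| ≤ (∫ l, l ^ 2 ∂μ) * |τ| := by
  rw [(hasDerivAt_specCorr h2 τ).deriv, abs_neg, ← integral_mul_const]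
  refine abs_integral_le_integral_abs.trans
    (integral_mono (integrable_mul_sin_mul h2 τ).abs (h2.mul_const _) fun l => ?_)
  calc |l * sin (l * τ)| ≤ |l| * |l * τ| := by
        rw [abs_mul]; exact mul_le_mul_of_nonneg_left abs_sin_le_abs (abs_nonneg l)
    _ = l ^ 2 * |τ| := by rw [abs_mul, ← mul_assoc, ← sq, sq_abs]

theorem deriv_specCorr_sq_le [IsFiniteMeasure μ] (h2 : Integrable (fun l : ℝ => l ^ 2) μ)
    (τ : ℝ) : deriv (specCorr μ) τ ^ 2 ≤ (∫ l, l ^ 2 ∂μ) * ∫ l, sin (l * τ) ^ 2 ∂μ := by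
  rw [(hasDerivAt_specCorr h2 τ).deriv, neg_sq]
  exact sq_integral_mul_le_integral_sq_mul_integral_sq h2 (integrable_sin_mul_sq τ)
    (integrable_mul_sin_mul h2 τ)

variable [IsProbabilityMeasure μ]

theorem one_sub_specCorr_sq_le (h2 : Integrable (fun l : ℝ => l ^ 2) μ) (τ : ℝ) :
    1 - specCorr μ τ ^ 2 ≤ (∫ l, l ^ 2 ∂μ) * τ ^ 2 := by
  have hcos : ∫ l, 1 - l ^ 2 * (τ ^ 2 / 2) ∂μ ≤ specCorr μ τ :=
    integral_mono ((integrable_const 1).sub (h2.mul_const _)) (integrable_cos_mul τ) fun l => by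
      simpa [mul_pow, mul_div_assoc] using one_sub_sq_div_two_le_cos (x := l * τ)
  rw [integral_sub (integrable_const 1) (h2.mul_const _), integral_mul_const] at hcos
  simp only [integral_const, probReal_univ, smul_eq_mul, one_mul] at hcos
  nlinarith [sq_nonneg (1 - specCorr μ τ)]

theorem one_sub_specCorr_sq_eq (τ : ℝ) :
    1 - specCorr μ τ ^ 2 =
      (∫ l, sin (l * τ) ^ 2 ∂μ) + ∫ l, (cos (l * τ) - specCorr μ τ) ^ 2 ∂μ := by
  set r := specCorr μ τ with hr
  have hpoint : ∀ l : ℝ,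
      sin (l * τ) ^ 2 + (cos (l * τ) - r) ^ 2 = 1 + r ^ 2 - 2 * r * cos (l * τ) :=
    fun l => by linear_combination sin_sq_add_cos_sq (l * τ)
  rw [← integral_add (integrable_sin_mul_sq τ) (integrable_cos_mul_sub_sq τ r)]
  simp only [hpoint]
  rw [integral_sub (integrable_const _) ((integrable_cos_mul τ).const_mul _), integral_const,
    integral_const_mul, ← specCorr, ← hr]
  simp only [probReal_univ, smul_eq_mul, one_mul]
  ring

theorem mul_sq_le_sigmaSq (h2 : Integrable (fun l : ℝ => l ^ 2) μ) (hlam : 0 < ∫ l, l ^ 2 ∂μ)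
    {K τ : ℝ} (hK : 0 < K) (hτ : τ ≠ 0)
    (hV : K * τ ^ 4 ≤ ∫ l, (cos (l * τ) - specCorr μ τ) ^ 2 ∂μ) :
    K * τ ^ 2 ≤ sigmaSq μ τ := by
  have hsplit := one_sub_specCorr_sq_eq (μ := μ) τ
  have hderiv := deriv_specCorr_sq_le h2 τ
  have hvar := one_sub_specCorr_sq_le h2 τ
  have hsin : 0 ≤ ∫ l, sin (l * τ) ^ 2 ∂μ := integral_nonneg fun _ => sq_nonneg _
  have hKτ : 0 < K * τ ^ 4 := by positivity
  have hP : 0 < 1 - specCorr μ τ ^ 2 := by linarith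
  rw [sigmaSq, deriv_deriv_specCorr_zero h2, neg_neg, le_sub_iff_add_le, ← le_sub_iff_add_le',
    div_le_iff₀ hP]
  nlinarith [mul_le_mul_of_nonneg_left hV hlam.le,
    mul_le_mul_of_nonneg_left hvar (by positivity : 0 ≤ K * τ ^ 2)]

end SpectralMeasure

theorem exists_pos_measure_sq_lt_and_sq_mem_Ioo {μ : Measure ℝ}
    (hsupp : ∀ a b : ℝ, μ {a, b}ᶜ ≠ 0) :
    ∃ c d D : ℝ, c < d ∧ 0 < μ {l | l ^ 2 < c} ∧ 0 < μ {l | l ^ 2 ∈ Ioo d D} := by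
  have of_lt : ∀ x ∈ μ.support, ∀ y ∈ μ.support, x ^ 2 < y ^ 2 →
      ∃ c d D : ℝ, c < d ∧ 0 < μ {l | l ^ 2 < c} ∧ 0 < μ {l | l ^ 2 ∈ Ioo d D} := by
    intro x hx y hy hxy
    refine ⟨(2 * x ^ 2 + y ^ 2) / 3, (x ^ 2 + 2 * y ^ 2) / 3, y ^ 2 + 1, by linarith,
      (μ.mem_support_iff_forall x).1 hx _ ?_, (μ.mem_support_iff_forall y).1 hy _ ?_⟩
    · exact (isOpen_lt (continuous_pow 2) continuous_const).mem_nhds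
        (show x ^ 2 < _ by linarith)
    · exact (isOpen_Ioo.preimage (continuous_pow 2)).mem_nhds
        (show y ^ 2 ∈ Ioo _ _ from ⟨by linarith, by linarith⟩)
  obtain ⟨x, hx⟩ := μ.nonempty_support fun h => hsupp 0 0 (by simp [h])
  obtain ⟨y, hyx, hy⟩ := μ.nonempty_inter_support_of_pos (pos_iff_ne_zero.2 (hsupp x (-x)))
  have hxy : x ^ 2 ≠ y ^ 2 := fun h => hyx <| by
    rcases sq_eq_sq_iff_eq_or_eq_neg.1 h.symm with h | h <;> simp [h]
  rcases hxy.lt_or_gt with h | h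
  exacts [of_lt x hx y hy h, of_lt y hy x hx h]

theorem exists_pos_eventually_mul_pow_four_le_integral_cos_sub_sq {μ : Measure ℝ}
    [IsFiniteMeasure μ] (hsupp : ∀ a b : ℝ, μ {a, b}ᶜ ≠ 0) :
    ∃ K > 0, ∀ᶠ τ in 𝓝 0, ∀ a : ℝ, K * τ ^ 4 ≤ ∫ l, (cos (l * τ) - a) ^ 2 ∂μ := by
  obtain ⟨c, d, D, hcd, hS, hT⟩ := exists_pos_measure_sq_lt_and_sq_mem_Ioo hsupp
  set S := {l : ℝ | l ^ 2 < c}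
  set T := {l : ℝ | l ^ 2 ∈ Ioo d D}
  have hSm : MeasurableSet S := (isOpen_lt (continuous_pow 2) continuous_const).measurableSet
  have hTm : MeasurableSet T := (isOpen_Ioo.preimage (continuous_pow 2)).measurableSet
  have hmin : 0 < min (μ.real S) (μ.real T) :=
    lt_min (ENNReal.toReal_pos hS.ne' (measure_ne_top μ S))
      (ENNReal.toReal_pos hT.ne' (measure_ne_top μ T))
  refine ⟨((d - c) / 8) ^ 2 * min (μ.real S) (μ.real T),
    mul_pos (pow_pos (by linarith) 2) hmin, ?_⟩
  have hsmall : ∀ᶠ τ in 𝓝 (0 : ℝ), D * τ ^ 2 < 1 ∧ D ^ 2 * τ ^ 2 < d - c :=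
    ((continuous_const.mul (continuous_pow 2)).continuousAt.eventually_lt continuousAt_const
      (by simp)).and
    ((continuous_const.mul (continuous_pow 2)).continuousAt.eventually_lt continuousAt_const
      (by simpa using hcd))
  filter_upwards [hsmall] with τ ⟨hD1, hDc⟩ a
  have hSY : ∀ l ∈ S, 1 - c * τ ^ 2 / 2 ≤ cos (l * τ) := fun l (hl : l ^ 2 < c) => by
    nlinarith [one_sub_sq_div_two_le_cos (x := l * τ), mul_le_mul_of_nonneg_right hl.le
      (sq_nonneg τ)]
  have hTY : ∀ l ∈ T, cos (l * τ) ≤ 1 - d * τ ^ 2 / 2 + (d - c) * τ ^ 2 / 4 := by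
    rintro l ⟨hdl, hlD⟩
    have hx2 : (l * τ) ^ 2 ≤ D * τ ^ 2 := by
      rw [mul_pow]; exact mul_le_mul_of_nonneg_right hlD.le (sq_nonneg τ)
    have hx4 : (l * τ) ^ 4 ≤ (d - c) * τ ^ 2 := by
      calc (l * τ) ^ 4 = ((l * τ) ^ 2) ^ 2 := by ring
        _ ≤ (D * τ ^ 2) ^ 2 := pow_le_pow_left₀ (sq_nonneg _) hx2 2
        _ = D ^ 2 * τ ^ 2 * τ ^ 2 := by ring
        _ ≤ (d - c) * τ ^ 2 := by gcongr
    nlinarith [cos_le_one_sub_sq_div_two_add (hx2.trans hD1.le),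
      mul_le_mul_of_nonneg_right hdl.le (sq_nonneg τ)]
  calc ((d - c) / 8) ^ 2 * min (μ.real S) (μ.real T) * τ ^ 4
      = (((1 - c * τ ^ 2 / 2) - (1 - d * τ ^ 2 / 2 + (d - c) * τ ^ 2 / 4)) / 2) ^ 2 *
          min (μ.real S) (μ.real T) := by ring
    _ ≤ ∫ l, (cos (l * τ) - a) ^ 2 ∂μ :=
      mul_min_measureReal_le_integral_sq_sub a (integrable_cos_mul_sub_sq τ a) hSm hTm hSY hTY
        (by nlinarith [sq_nonneg τ])

theorem deriv_specCorr_div_sigma_bounded_general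
    (μ : Measure ℝ) [IsProbabilityMeasure μ]
    (hlam2fin : Integrable (fun l : ℝ => l ^ 2) μ)
    (hlam2pos : 0 < ∫ l : ℝ, l ^ 2 ∂μ)
    (hsupp : ∀ a b : ℝ, μ ({a, b}ᶜ) ≠ 0) :
    ∃ δ > (0:ℝ), ∃ C : ℝ, ∀ τ ∈ Set.Ioc (0:ℝ) δ,
      |deriv (specCorr μ) τ| / Real.sqrt (sigmaSq μ τ) ≤ C := by
  obtain ⟨K, hK, hvar⟩ := exists_pos_eventually_mul_pow_four_le_integral_cos_sub_sq hsupp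
  obtain ⟨δ, hδ, hδvar⟩ := mem_nhdsGT_iff_exists_Ioc_subset.1 (nhdsWithin_le_nhds hvar)
  refine ⟨δ, hδ, (∫ l, l ^ 2 ∂μ) / √K, fun τ hτδ => ?_⟩
  have hτ : 0 < τ := hτδ.1
  have hσ : √K * τ ≤ √(sigmaSq μ τ) := by
    calc √K * τ = √(K * τ ^ 2) := by rw [sqrt_mul hK.le, sqrt_sq hτ.le]
      _ ≤ √(sigmaSq μ τ) :=
        sqrt_le_sqrt (mul_sq_le_sigmaSq hlam2fin hlam2pos hK hτ.ne' (hδvar hτδ _))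
  calc |deriv (specCorr μ) τ| / √(sigmaSq μ τ)
      ≤ (∫ l, l ^ 2 ∂μ) * τ / (√K * τ) := by
        gcongr
        simpa [abs_of_pos hτ] using abs_deriv_specCorr_le hlam2fin τ
    _ = (∫ l, l ^ 2 ∂μ) / √K := mul_div_mul_right _ _ hτ.ne'

/-- `|r'(τ)|/σ(τ)` is bounded on some `(0, δ]`. -/
theorem deriv_specCorr_div_sigma_bounded
    (μ : Measure ℝ) [IsProbabilityMeasure μ]
    (hsymm : Measure.map (fun l => -l) μ = μ)
    (hlam2fin : Integrable (fun l : ℝ => l ^ 2) μ)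
    (hlam2pos : 0 < ∫ l : ℝ, l ^ 2 ∂μ)
    (hsupp : ∀ a b : ℝ, μ ({a, b}ᶜ) ≠ 0)
    (hcond1 : ConditionOne (specCorr μ))
    (hpos : ∃ δ₁ > (0:ℝ), ∀ τ ∈ Set.Ioc (0:ℝ) δ₁,
      0 < 1 - (specCorr μ τ) ^ 2 ∧ 0 < sigmaSq μ τ) :
    ∃ δ > (0:ℝ), ∃ C : ℝ, ∀ τ ∈ Set.Ioc (0:ℝ) δ,
      |deriv (specCorr μ) τ| / Real.sqrt (sigmaSq μ τ) ≤ C :=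
  deriv_specCorr_div_sigma_bounded_general μ hlam2fin hlam2pos hsupp
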